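/- arXiv:2111.10243 — 2 statements merged into one kernel-verified Lean document; each statement's English description precedes it below -/
import Mathlib

section
/- (Second-moment Lipschitz bound for the square loss) In the linear regression setting, there exists an explicit constant C₀ depending only on M_X, M_u, k (one may take C₀ = M_X² (8 k/(k−2) + 32 M_X² M_u²)) such that for all u₁, u₂ ∈ ℝ^d with ‖u₁‖₂ ≤ M_u and ‖u₂‖₂ ≤ M_u: E[ ((Y − Xu₁)² − (Y − Xu₂)²)² ] ≤ C₀ ‖u₁ − u₂‖₂². -/
open MeasureTheory Real
open scoped RealInnerProductSpace

noncomputable section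

variable {Ω : Type*} [MeasurableSpace Ω] {d : ℕ}

/-- The risk of the square loss, `R(u) = E[(Y − Xu)²]`. -/
def riskLR (P : Measure Ω) (X : Ω → EuclideanSpace ℝ (Fin d)) (Y : Ω → ℝ)
    (u : EuclideanSpace ℝ (Fin d)) : ℝ :=
  ∫ ω, (Y ω - ⟪X ω, u⟫) ^ 2 ∂P

/-- **Second-moment Lipschitz bound for the square loss.** With the explicit constant
`C₀ = M_X² (8 k/(k−2) + 32 M_X² M_u²)`, for all `u₁, u₂` in the hypothesis ball,
`E[((Y − Xu₁)² − (Y − Xu₂)²)²] ≤ C₀ ‖u₁ − u₂‖²`. -/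
theorem second_moment_lipschitz
    (P : Measure Ω) [IsProbabilityMeasure P]
    (X : Ω → EuclideanSpace ℝ (Fin d)) (hXmeas : Measurable X)
    (e : Ω → ℝ) (hemeas : Measurable e)
    (u₀ : EuclideanSpace ℝ (Fin d))
    (M_X M_u : ℝ) (hMX : 0 < M_X) (hMu : 0 < M_u)
    (hXbdd : ∀ᵐ ω ∂P, ‖X ω‖ ≤ M_X) (hu₀ : ‖u₀‖ ≤ M_u)
    (k : ℝ) (hk : 2 < k)
    (hmean : ∫ ω, e ω ∂P = 0)
    (hvar : ∫ ω, e ω ^ 2 ∂P = k / (k - 2))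
    (hmom : ∀ r : ℝ, 0 < r → r < k → Integrable (fun ω => |e ω| ^ r) P)
    (hindep : ProbabilityTheory.IndepFun e X P)
    (Y : Ω → ℝ) (hY : ∀ ω, Y ω = ⟪X ω, u₀⟫ + e ω)
    :
    ∀ u₁ u₂ : EuclideanSpace ℝ (Fin d), ‖u₁‖ ≤ M_u → ‖u₂‖ ≤ M_u →
      ∫ ω, ((Y ω - ⟪X ω, u₁⟫) ^ 2 - (Y ω - ⟪X ω, u₂⟫) ^ 2) ^ 2 ∂P ≤
        M_X ^ 2 * (8 * k / (k - 2) + 32 * M_X ^ 2 * M_u ^ 2) * ‖u₁ - u₂‖ ^ 2 := by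
  intro u₁ u₂ hu₁ hu₂
  have hk2 : (0:ℝ) < k - 2 := by linarith
  have he2 : Integrable (fun ω => e ω ^ 2) P := by
    have h2 := hmom 2 two_pos hk
    have heq : (fun ω => |e ω| ^ (2:ℝ)) = fun ω => e ω ^ 2 := by
      funext ω
      rw [show (2:ℝ) = ((2:ℕ):ℝ) by norm_num, Real.rpow_natCast, sq_abs]
    rwa [heq] at h2
  set C : ℝ := M_X ^ 2 * ‖u₁ - u₂‖ ^ 2 with hC
  have hCnn : 0 ≤ C := by positivity
  have hg : Integrable (fun ω => C * (8 * e ω ^ 2 + 32 * M_X ^ 2 * M_u ^ 2)) P :=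
    ((he2.const_mul 8).add (integrable_const _)).const_mul C
  have hbound : ∀ᵐ ω ∂P, ((Y ω - ⟪X ω, u₁⟫) ^ 2 - (Y ω - ⟪X ω, u₂⟫) ^ 2) ^ 2 ≤
      C * (8 * e ω ^ 2 + 32 * M_X ^ 2 * M_u ^ 2) := by
    filter_upwards [hXbdd] with ω hX
    have hXnn : (0:ℝ) ≤ ‖X ω‖ := norm_nonneg _
    have h0 : |⟪X ω, u₀⟫| ≤ M_X * M_u :=
      (abs_real_inner_le_norm _ _).trans (mul_le_mul hX hu₀ (norm_nonneg _) hMX.le)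
    have h1 : |⟪X ω, u₁⟫| ≤ M_X * M_u :=
      (abs_real_inner_le_norm _ _).trans (mul_le_mul hX hu₁ (norm_nonneg _) hMX.le)
    have h2 : |⟪X ω, u₂⟫| ≤ M_X * M_u :=
      (abs_real_inner_le_norm _ _).trans (mul_le_mul hX hu₂ (norm_nonneg _) hMX.le)
    have hd : |⟪X ω, u₁⟫ - ⟪X ω, u₂⟫| ≤ M_X * ‖u₁ - u₂‖ := by
      rw [← inner_sub_right]
      exact (abs_real_inner_le_norm _ _).trans
        (mul_le_mul_of_nonneg_right hX (norm_nonneg _))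
    set x0 := ⟪X ω, u₀⟫
    set x1 := ⟪X ω, u₁⟫
    set x2 := ⟪X ω, u₂⟫
    have hYω := hY ω
    have hda : (x1 - x2) ^ 2 ≤ M_X ^ 2 * ‖u₁ - u₂‖ ^ 2 := by
      rw [← sq_abs]
      calc |x1 - x2| ^ 2 ≤ (M_X * ‖u₁ - u₂‖) ^ 2 :=
            pow_le_pow_left₀ (abs_nonneg _) hd 2
        _ = M_X ^ 2 * ‖u₁ - u₂‖ ^ 2 := by ring
    have hcb : (2 * x0 - x1 - x2) ^ 2 ≤ 16 * M_X ^ 2 * M_u ^ 2 := by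
      have habs0 := abs_nonneg x0
      nlinarith [sq_abs x0, sq_abs x1, sq_abs x2, abs_nonneg x1, abs_nonneg x2,
        neg_abs_le x0, le_abs_self x0, neg_abs_le x1, le_abs_self x1,
        neg_abs_le x2, le_abs_self x2, mul_pos hMX hMu]
    have hsq : (2 * e ω + (2 * x0 - x1 - x2)) ^ 2 ≤ 8 * e ω ^ 2 + 32 * M_X ^ 2 * M_u ^ 2 := by
      nlinarith [sq_nonneg (2 * e ω - (2 * x0 - x1 - x2))]
    have hfact : ((Y ω - x1) ^ 2 - (Y ω - x2) ^ 2) ^ 2 =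
        (x1 - x2) ^ 2 * (2 * e ω + (2 * x0 - x1 - x2)) ^ 2 := by
      rw [hYω]; ring
    rw [hfact, hC]
    calc (x1 - x2) ^ 2 * (2 * e ω + (2 * x0 - x1 - x2)) ^ 2
        ≤ (M_X ^ 2 * ‖u₁ - u₂‖ ^ 2) * (8 * e ω ^ 2 + 32 * M_X ^ 2 * M_u ^ 2) :=
          mul_le_mul hda hsq (sq_nonneg _) (by positivity)
      _ = _ := rfl
  have hint := integral_mono_of_nonneg (Filter.Eventually.of_forall fun ω => sq_nonneg _)
    hg hbound
  calc ∫ ω, ((Y ω - ⟪X ω, u₁⟫) ^ 2 - (Y ω - ⟪X ω, u₂⟫) ^ 2) ^ 2 ∂P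
      ≤ ∫ ω, C * (8 * e ω ^ 2 + 32 * M_X ^ 2 * M_u ^ 2) ∂P := hint
    _ = C * (8 * (k / (k - 2)) + 32 * M_X ^ 2 * M_u ^ 2) := by
        rw [integral_const_mul, integral_add (he2.const_mul 8) (integrable_const _),
          integral_const_mul, hvar, integral_const]
        simp
    _ = M_X ^ 2 * (8 * k / (k - 2) + 32 * M_X ^ 2 * M_u ^ 2) * ‖u₁ - u₂‖ ^ 2 := by
        rw [hC]; ring
end
end

section
/- (Bernstein's condition with exponent 1 for the square loss) In the linear regression setting, if E[(Xz)²] > 0 for every unit vector z ∈ ℝ^d, then there exists B > 0 such that for all u ∈ ℝ^d with ‖u‖₂ ≤ M_u: E[ ((Y − Xu)² − (Y − Xu₀)²)² ] ≤ B ( R(u) − R(u₀) ); that is, the square loss satisfies the (multi-scale) Bernstein's condition with order α = 1. -/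
open MeasureTheory Real
open scoped RealInnerProductSpace

noncomputable section

variable {Ω : Type*} [MeasurableSpace Ω] {d : ℕ}

/-! Write `s = ⟪X, u₀ - u⟫`, so that `Y - Xu = s + ε` and `Y - Xu₀ = ε`. Independence of `s`
from the centred noise kills every term of odd degree in `ε`, which gives
`R(u) - R(u₀) = E[s²]` and `E[((s + ε)² - ε²)²] = E[s⁴] + 4 E[ε²] E[s²]`.
As `|s| ≤ 2 M_X M_u`, also `E[s⁴] ≤ (2 M_X M_u)² E[s²]`, so `B = (2 M_X M_u)² + 4 E[ε²]` works. -/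

open ProbabilityTheory

section IndependentNoise

variable {P : Measure Ω} {s e : Ω → ℝ} {c : ℝ}

lemma integral_pow_mul_pow_of_indepFun (hind : s ⟂ᵢ[P] e) (hs : AEStronglyMeasurable s P)
    (he : AEStronglyMeasurable e P) (m n : ℕ) :
    ∫ ω, s ω ^ m * e ω ^ n ∂P = (∫ ω, s ω ^ m ∂P) * ∫ ω, e ω ^ n ∂P :=
  (hind.comp (measurable_id.pow_const m) (measurable_id.pow_const n)
    ).integral_fun_mul_eq_mul_integral (hs.pow m) (he.pow n)

lemma MeasureTheory.Integrable.pow_mul_of_ae_abs_le {g : Ω → ℝ} (hg : Integrable g P)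
    (hs : AEStronglyMeasurable s P) (hb : ∀ᵐ ω ∂P, |s ω| ≤ c) (n : ℕ) :
    Integrable (fun ω => s ω ^ n * g ω) P := by
  refine hg.bdd_mul (c := c ^ n) (hs.pow n) ?_
  filter_upwards [hb] with ω hω
  rw [norm_pow, Real.norm_eq_abs]
  exact pow_le_pow_left₀ (abs_nonneg _) hω n

lemma integrable_pow_of_ae_abs_le [IsFiniteMeasure P] (hs : AEStronglyMeasurable s P)
    (hb : ∀ᵐ ω ∂P, |s ω| ≤ c) (n : ℕ) : Integrable (fun ω => s ω ^ n) P := by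
  simpa using (integrable_const (1 : ℝ)).pow_mul_of_ae_abs_le hs hb n

lemma integral_pow_four_le_of_ae_abs_le [IsFiniteMeasure P] (hs : AEStronglyMeasurable s P)
    (hb : ∀ᵐ ω ∂P, |s ω| ≤ c) : ∫ ω, s ω ^ 4 ∂P ≤ c ^ 2 * ∫ ω, s ω ^ 2 ∂P := by
  rw [← integral_const_mul]
  refine integral_mono_ae (integrable_pow_of_ae_abs_le hs hb 4)
    ((integrable_pow_of_ae_abs_le hs hb 2).const_mul _) ?_
  filter_upwards [hb] with ω hω
  have hsq : s ω ^ 2 ≤ c ^ 2 := sq_le_sq' (abs_le.1 hω).1 (abs_le.1 hω).2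
  calc s ω ^ 4 = s ω ^ 2 * s ω ^ 2 := by ring
    _ ≤ c ^ 2 * s ω ^ 2 := mul_le_mul_of_nonneg_right hsq (sq_nonneg _)

variable [IsFiniteMeasure P] (hind : s ⟂ᵢ[P] e) (hs : AEStronglyMeasurable s P)
  (hb : ∀ᵐ ω ∂P, |s ω| ≤ c) (he : MemLp e 2 P) (hmean : ∫ ω, e ω ∂P = 0)
include hind hs hb he hmean

lemma integral_add_sq_sub_integral_sq :
    ∫ ω, (s ω + e ω) ^ 2 ∂P - ∫ ω, e ω ^ 2 ∂P = ∫ ω, s ω ^ 2 ∂P := by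
  have hse := (he.integrable one_le_two).pow_mul_of_ae_abs_le hs hb 1
  have hs2 := integrable_pow_of_ae_abs_le hs hb 2
  have hcross : ∫ ω, s ω ^ 1 * e ω ∂P = 0 := by
    simpa [hmean] using integral_pow_mul_pow_of_indepFun hind hs he.1 1 1
  have hexpand : ∀ ω, (s ω + e ω) ^ 2 = s ω ^ 2 + 2 * (s ω ^ 1 * e ω) + e ω ^ 2 := fun ω => by
    ring
  simp only [hexpand]
  rw [integral_add (by exact hs2.add (hse.const_mul 2)) he.integrable_sq,
    integral_add hs2 (hse.const_mul 2), integral_const_mul, hcross]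
  ring

lemma integral_add_sq_sub_sq_sq :
    ∫ ω, ((s ω + e ω) ^ 2 - e ω ^ 2) ^ 2 ∂P
      = ∫ ω, s ω ^ 4 ∂P + 4 * (∫ ω, e ω ^ 2 ∂P) * ∫ ω, s ω ^ 2 ∂P := by
  have hs4 := integrable_pow_of_ae_abs_le hs hb 4
  have hs3e := (he.integrable one_le_two).pow_mul_of_ae_abs_le hs hb 3
  have hs2e2 := he.integrable_sq.pow_mul_of_ae_abs_le hs hb 2
  have hcross : ∫ ω, s ω ^ 3 * e ω ∂P = 0 := by
    simpa [hmean] using integral_pow_mul_pow_of_indepFun hind hs he.1 3 1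
  have hexpand : ∀ ω, ((s ω + e ω) ^ 2 - e ω ^ 2) ^ 2
      = s ω ^ 4 + 4 * (s ω ^ 3 * e ω) + 4 * (s ω ^ 2 * e ω ^ 2) := fun ω => by
    ring
  simp only [hexpand]
  rw [integral_add (by exact hs4.add (hs3e.const_mul 4)) (hs2e2.const_mul 4),
    integral_add hs4 (hs3e.const_mul 4), integral_const_mul, integral_const_mul, hcross,
    integral_pow_mul_pow_of_indepFun hind hs he.1 2 2]
  ring

lemma integral_add_sq_sub_sq_sq_le :
    ∫ ω, ((s ω + e ω) ^ 2 - e ω ^ 2) ^ 2 ∂P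
      ≤ (c ^ 2 + 4 * ∫ ω, e ω ^ 2 ∂P) * (∫ ω, (s ω + e ω) ^ 2 ∂P - ∫ ω, e ω ^ 2 ∂P) := by
  rw [integral_add_sq_sub_sq_sq hind hs hb he hmean,
    integral_add_sq_sub_integral_sq hind hs hb he hmean]
  linarith [integral_pow_four_le_of_ae_abs_le hs hb]

end IndependentNoise

theorem bernstein_condition_sq_loss_general
    (P : Measure Ω) [IsProbabilityMeasure P]
    (X : Ω → EuclideanSpace ℝ (Fin d)) (hXmeas : Measurable X)
    (e : Ω → ℝ) (hemeas : Measurable e)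
    (u₀ : EuclideanSpace ℝ (Fin d))
    (M_X M_u : ℝ)
    (hXbdd : ∀ᵐ ω ∂P, ‖X ω‖ ≤ M_X) (hu₀ : ‖u₀‖ ≤ M_u)
    (k : ℝ) (hk : 2 < k)
    (hmean : ∫ ω, e ω ∂P = 0)
    (hvar : ∫ ω, e ω ^ 2 ∂P = k / (k - 2))
    (hindep : ProbabilityTheory.IndepFun e X P)
    (Y : Ω → ℝ) (hY : ∀ ω, Y ω = ⟪X ω, u₀⟫ + e ω)
    :
    ∃ B : ℝ, 0 < B ∧ ∀ u : EuclideanSpace ℝ (Fin d), ‖u‖ ≤ M_u →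
      ∫ ω, ((Y ω - ⟪X ω, u⟫) ^ 2 - (Y ω - ⟪X ω, u₀⟫) ^ 2) ^ 2 ∂P ≤
        B * (riskLR P X Y u - riskLR P X Y u₀) := by
  have hσ : 0 < k / (k - 2) := div_pos (by linarith) (by linarith)
  -- `hvar` forces `e ^ 2` to be integrable: a non-integrable function has integral `0`.
  have he : MemLp e 2 P := (memLp_two_iff_integrable_sq hemeas.aestronglyMeasurable).2
    (Integrable.of_integral_ne_zero (by linarith))
  refine ⟨(M_X * (2 * M_u)) ^ 2 + 4 * (k / (k - 2)), by positivity, fun u hu => ?_⟩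
  have hinner : Continuous fun x : EuclideanSpace ℝ (Fin d) => ⟪x, u₀ - u⟫ :=
    continuous_id.inner continuous_const
  have hb : ∀ᵐ ω ∂P, |⟪X ω, u₀ - u⟫| ≤ M_X * (2 * M_u) := by
    filter_upwards [hXbdd] with ω hω
    calc |⟪X ω, u₀ - u⟫| ≤ ‖X ω‖ * ‖u₀ - u‖ := abs_real_inner_le_norm _ _
      _ ≤ M_X * (2 * M_u) := mul_le_mul hω (by linarith [norm_sub_le u₀ u]) (norm_nonneg _)
          ((norm_nonneg _).trans hω)
  have hres : ∀ ω, Y ω - ⟪X ω, u⟫ = ⟪X ω, u₀ - u⟫ + e ω := fun ω => by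
    rw [hY, inner_sub_right]; ring
  have hres₀ : ∀ ω, Y ω - ⟪X ω, u₀⟫ = e ω := fun ω => by rw [hY]; ring
  simp only [riskLR, hres, hres₀, ← hvar]
  exact integral_add_sq_sub_sq_sq_le (hindep.symm.comp hinner.measurable measurable_id)
    (hinner.measurable.comp hXmeas).aestronglyMeasurable hb he hmean

/-- **Bernstein's condition with exponent 1 for the square loss.** If `E[(Xz)²] > 0` for
every unit vector `z`, then there is `B > 0` such that for all `u` with `‖u‖₂ ≤ M_u`,
`E[((Y − Xu)² − (Y − Xu₀)²)²] ≤ B (R(u) − R(u₀))`. -/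
theorem bernstein_condition_sq_loss
    (P : Measure Ω) [IsProbabilityMeasure P]
    (X : Ω → EuclideanSpace ℝ (Fin d)) (hXmeas : Measurable X)
    (e : Ω → ℝ) (hemeas : Measurable e)
    (u₀ : EuclideanSpace ℝ (Fin d))
    (M_X M_u : ℝ) (hMX : 0 < M_X) (hMu : 0 < M_u)
    (hXbdd : ∀ᵐ ω ∂P, ‖X ω‖ ≤ M_X) (hu₀ : ‖u₀‖ ≤ M_u)
    (k : ℝ) (hk : 2 < k)
    (hmean : ∫ ω, e ω ∂P = 0)
    (hvar : ∫ ω, e ω ^ 2 ∂P = k / (k - 2))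
    (hmom : ∀ r : ℝ, 0 < r → r < k → Integrable (fun ω => |e ω| ^ r) P)
    (hindep : ProbabilityTheory.IndepFun e X P)
    (Y : Ω → ℝ) (hY : ∀ ω, Y ω = ⟪X ω, u₀⟫ + e ω)
    (hpos : ∀ z : EuclideanSpace ℝ (Fin d), ‖z‖ = 1 → 0 < ∫ ω, ⟪X ω, z⟫ ^ 2 ∂P)
    :
    ∃ B : ℝ, 0 < B ∧ ∀ u : EuclideanSpace ℝ (Fin d), ‖u‖ ≤ M_u →
      ∫ ω, ((Y ω - ⟪X ω, u⟫) ^ 2 - (Y ω - ⟪X ω, u₀⟫) ^ 2) ^ 2 ∂P ≤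
        B * (riskLR P X Y u - riskLR P X Y u₀) :=
  bernstein_condition_sq_loss_general P X hXmeas e hemeas u₀ M_X M_u hXbdd hu₀ k hk hmean hvar
    hindep Y hY
end
end
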